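/- Let λ_1, …, λ_n, φ_1, …, φ_n : U → ℝ be smooth functions on an open set U ⊆ ℝⁿ with λ_i = tan φ_i, cos φ_i ≠ 0, λ_i ≠ λ_j pointwise for i ≠ j, and 1 + λ_iλ_j ≠ 0 pointwise for i ≠ j. Then condition (R): ∂_{r_k}((∂_{r_i}λ_j)/(λ_i−λ_j)) = ∂_{r_i}((∂_{r_k}λ_j)/(λ_k−λ_j)) for all distinct i,j,k, holds if and only if condition (Φ): ∂_{r_k}((∂_{r_i}φ_j)/tan(φ_i−φ_j)) = ∂_{r_i}((∂_{r_k}φ_j)/tan(φ_k−φ_j)) for all distinct i,j,k, holds. -/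

import Mathlib

/-- Partial derivative in the `i`-th coordinate direction of `ℝⁿ = Fin n → ℝ`. -/
noncomputable def pder {n : ℕ} (i : Fin n) (f : (Fin n → ℝ) → ℝ) (x : Fin n → ℝ) : ℝ :=
  fderiv ℝ f x (Pi.single i 1)

open Real in
lemma Bialy.tan_sub_eq (a b : ℝ) (ha : cos a ≠ 0) (hb : cos b ≠ 0) :
    tan a - tan b = sin (a - b) / (cos a * cos b) := by
  rw [Real.tan_eq_sin_div_cos, Real.tan_eq_sin_div_cos, Real.sin_sub]
  field_simp

open Real in
lemma Bialy.cos_sub_ne (a b : ℝ) (ha : cos a ≠ 0) (hb : cos b ≠ 0)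
    (h : 1 + tan a * tan b ≠ 0) : cos (a - b) ≠ 0 := by
  have : cos (a - b) = cos a * cos b * (1 + tan a * tan b) := by
    rw [Real.cos_sub, Real.tan_eq_sin_div_cos, Real.tan_eq_sin_div_cos]
    field_simp
  rw [this]
  exact mul_ne_zero (mul_ne_zero ha hb) h

open Real in
lemma Bialy.sin_sub_ne (a b : ℝ) (ha : cos a ≠ 0) (hb : cos b ≠ 0)
    (h : tan a ≠ tan b) : sin (a - b) ≠ 0 := by
  rw [show sin (a-b) = (tan a - tan b) * (cos a * cos b) by
    rw [Bialy.tan_sub_eq a b ha hb]; field_simp]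
  exact mul_ne_zero (sub_ne_zero.2 h) (mul_ne_zero ha hb)

open Real in
lemma Bialy.key_id (a b p : ℝ) (ha : cos a ≠ 0) (hb : cos b ≠ 0)
    (hs : sin (a - b) ≠ 0) :
    (p / cos b ^ 2) / (tan a - tan b) = p / tan (a - b) - tan b * p := by
  rw [Bialy.tan_sub_eq a b ha hb, Real.tan_eq_sin_div_cos, Real.tan_eq_sin_div_cos]
  have h1 : cos (a - b) * cos b - sin (a - b) * sin b = cos a := by
    rw [← Real.cos_add]; ring_nf
  field_simp
  linear_combination (-p) * h1

lemma Bialy.pder_congr {n : ℕ} {i : Fin n} {f g : (Fin n → ℝ) → ℝ} {x : Fin n → ℝ}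
    (h : f =ᶠ[nhds x] g) : pder i f x = pder i g x := by
  unfold pder; rw [h.fderiv_eq]

lemma Bialy.pder_contDiffOn {n : ℕ} {U : Set (Fin n → ℝ)} (hU : IsOpen U) {f : (Fin n → ℝ) → ℝ}
    (hf : ContDiffOn ℝ (⊤ : ℕ∞) f U) (i : Fin n) : ContDiffOn ℝ (⊤ : ℕ∞) (pder i f) U := by
  have h1 : ContDiffOn ℝ (⊤ : ℕ∞) (fderiv ℝ f) U := hf.fderiv_of_isOpen hU (by simp)
  exact h1.clm_apply contDiffOn_const

lemma Bialy.pder_tan_comp {n : ℕ} {φ : (Fin n → ℝ) → ℝ} {x : Fin n → ℝ}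
    (hφ : DifferentiableAt ℝ φ x) (hc : Real.cos (φ x) ≠ 0) (i : Fin n) :
    pder i (fun y => Real.tan (φ y)) x = pder i φ x / Real.cos (φ x) ^ 2 := by
  have h := (Real.hasDerivAt_tan hc).comp_hasFDerivAt x hφ.hasFDerivAt
  unfold pder
  rw [show (fun y => Real.tan (φ y)) = Real.tan ∘ φ from rfl, h.fderiv]
  simp [div_eq_inv_mul, mul_comm]

lemma Bialy.pder_sub {n : ℕ} {f g : (Fin n → ℝ) → ℝ} {x : Fin n → ℝ}
    (hf : DifferentiableAt ℝ f x) (hg : DifferentiableAt ℝ g x) (i : Fin n) :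
    pder i (fun y => f y - g y) x = pder i f x - pder i g x := by
  unfold pder; rw [fderiv_fun_sub hf hg]; simp

lemma Bialy.pder_mul {n : ℕ} {f g : (Fin n → ℝ) → ℝ} {x : Fin n → ℝ}
    (hf : DifferentiableAt ℝ f x) (hg : DifferentiableAt ℝ g x) (i : Fin n) :
    pder i (fun y => f y * g y) x = f x * pder i g x + g x * pder i f x := by
  unfold pder; rw [fderiv_fun_mul hf hg]; simp

lemma Bialy.pder_comm {n : ℕ} {U : Set (Fin n → ℝ)} (hU : IsOpen U) {f : (Fin n → ℝ) → ℝ}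
    (hf : ContDiffOn ℝ (⊤ : ℕ∞) f U) {x : Fin n → ℝ} (hx : x ∈ U) (i k : Fin n) :
    pder k (pder i f) x = pder i (pder k f) x := by
  have hca : ContDiffAt ℝ (⊤ : ℕ∞) f x := (hf x hx).contDiffAt (hU.mem_nhds hx)
  have hsym : IsSymmSndFDerivAt ℝ f x := hca.isSymmSndFDerivAt (by rw [minSmoothness_of_isRCLikeNormedField]; exact WithTop.coe_le_coe.2 (le_top : (2 : ℕ∞) ≤ ⊤))
  have hdf : DifferentiableAt ℝ (fderiv ℝ f) x := by
    have h1 : ContDiffOn ℝ (⊤ : ℕ∞) (fderiv ℝ f) U := hf.fderiv_of_isOpen hU (by simp)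
    exact ((h1 x hx).contDiffAt (hU.mem_nhds hx)).differentiableAt (by simp)
  have key : ∀ (m : Fin n) (v : Fin n → ℝ),
      pder m (fun y => fderiv ℝ f y v) x = fderiv ℝ (fderiv ℝ f) x (Pi.single m 1) v := by
    intro m v
    unfold pder
    have h2 := ((ContinuousLinearMap.apply ℝ ℝ v).hasFDerivAt.comp x hdf.hasFDerivAt)
    rw [show (fun y => fderiv ℝ f y v) = (ContinuousLinearMap.apply ℝ ℝ v) ∘ fderiv ℝ f from rfl,
      h2.fderiv]
    simp
  calc pder k (pder i f) x = fderiv ℝ (fderiv ℝ f) x (Pi.single k 1) (Pi.single i 1) :=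
        key k (Pi.single i 1)
    _ = fderiv ℝ (fderiv ℝ f) x (Pi.single i 1) (Pi.single k 1) := hsym _ _
    _ = pder i (pder k f) x := (key i (Pi.single k 1)).symm

/-- Lemma 3.1 of Bialy's paper: conditions (R) and (Φ) are equivalent. -/
theorem R_iff_Phi
    {n : ℕ} (U : Set (Fin n → ℝ)) (hU : IsOpen U)
    (lam phi : Fin n → (Fin n → ℝ) → ℝ)
    (hlam : ∀ i, ContDiffOn ℝ (⊤ : ℕ∞) (lam i) U)
    (hphi : ∀ i, ContDiffOn ℝ (⊤ : ℕ∞) (phi i) U)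
    (htan : ∀ i, ∀ x ∈ U, lam i x = Real.tan (phi i x))
    (hcos : ∀ i, ∀ x ∈ U, Real.cos (phi i x) ≠ 0)
    (hne : ∀ i j, i ≠ j → ∀ x ∈ U, lam i x ≠ lam j x)
    (hden : ∀ i j, i ≠ j → ∀ x ∈ U, 1 + lam i x * lam j x ≠ 0) :
    (∀ i j k, i ≠ j → j ≠ k → i ≠ k → ∀ x ∈ U,
        pder k (fun y => pder i (lam j) y / (lam i y - lam j y)) x =
        pder i (fun y => pder k (lam j) y / (lam k y - lam j y)) x)
    ↔
    (∀ i j k, i ≠ j → j ≠ k → i ≠ k → ∀ x ∈ U,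
        pder k (fun y => pder i (phi j) y / Real.tan (phi i y - phi j y)) x =
        pder i (fun y => pder k (phi j) y / Real.tan (phi k y - phi j y)) x) := by
  -- basic differentiability facts
  have hdφ : ∀ j, ∀ x ∈ U, DifferentiableAt ℝ (phi j) x := fun j x hx =>
    ((hphi j x hx).contDiffAt (hU.mem_nhds hx)).differentiableAt (by simp)
  have hdP : ∀ i j, ∀ x ∈ U, DifferentiableAt ℝ (pder i (phi j)) x := fun i j x hx =>
    (((Bialy.pder_contDiffOn hU (hphi j) i) x hx).contDiffAt (hU.mem_nhds hx)).differentiableAt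
      (by simp)
  have hT : ∀ j, ∀ x ∈ U, DifferentiableAt ℝ (fun y => Real.tan (phi j y)) x := fun j x hx =>
    (Real.differentiableAt_tan.2 (hcos j x hx)).comp x (hdφ j x hx)
  have htt : ∀ i j, i ≠ j → ∀ x ∈ U, Real.tan (phi i x) ≠ Real.tan (phi j x) := by
    intro i j hij x hx
    rw [← htan i x hx, ← htan j x hx]; exact hne i j hij x hx
  have hsin : ∀ i j, i ≠ j → ∀ x ∈ U, Real.sin (phi i x - phi j x) ≠ 0 := fun i j hij x hx =>
    Bialy.sin_sub_ne _ _ (hcos i x hx) (hcos j x hx) (htt i j hij x hx)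
  have hcsub : ∀ i j, i ≠ j → ∀ x ∈ U, Real.cos (phi i x - phi j x) ≠ 0 := by
    intro i j hij x hx
    refine Bialy.cos_sub_ne _ _ (hcos i x hx) (hcos j x hx) ?_
    rw [← htan i x hx, ← htan j x hx]; exact hden i j hij x hx
  have htns : ∀ i j, i ≠ j → ∀ x ∈ U, Real.tan (phi i x - phi j x) ≠ 0 := by
    intro i j hij x hx
    rw [Real.tan_eq_sin_div_cos]
    exact div_ne_zero (hsin i j hij x hx) (hcsub i j hij x hx)
  -- differentiability of the Φ-quotient and the correction term
  have hG : ∀ i j, i ≠ j → ∀ x ∈ U,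
      DifferentiableAt ℝ (fun y => pder i (phi j) y / Real.tan (phi i y - phi j y)) x := by
    intro i j hij x hx
    have hT2 : DifferentiableAt ℝ (fun y => Real.tan (phi i y - phi j y)) x :=
      (Real.differentiableAt_tan.2 (hcsub i j hij x hx)).comp (g := Real.tan) (f := fun y => phi i y - phi j y) x
        ((hdφ i x hx).sub (hdφ j x hx))
    have h1 : DifferentiableAt ℝ
        (fun y => pder i (phi j) y * (Real.tan (phi i y - phi j y))⁻¹) x :=
      (hdP i j x hx).mul (hT2.inv (htns i j hij x hx))
    simpa only [div_eq_mul_inv] using h1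
  have hH : ∀ i j, ∀ x ∈ U,
      DifferentiableAt ℝ (fun y => Real.tan (phi j y) * pder i (phi j) y) x := fun i j x hx =>
    (hT j x hx).mul (hdP i j x hx)
  -- the key pointwise bridge identity
  have bridge : ∀ i j (k : Fin n), i ≠ j → ∀ x ∈ U,
      pder k (fun y => pder i (lam j) y / (lam i y - lam j y)) x =
        pder k (fun y => pder i (phi j) y / Real.tan (phi i y - phi j y)) x -
        pder k (fun y => Real.tan (phi j y) * pder i (phi j) y) x := by
    intro i j k hij x hx
    have heq : (fun y => pder i (lam j) y / (lam i y - lam j y)) =ᶠ[nhds x]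
        (fun y => pder i (phi j) y / Real.tan (phi i y - phi j y) -
          Real.tan (phi j y) * pder i (phi j) y) := by
      filter_upwards [hU.mem_nhds hx] with y hy
      have hpl : pder i (lam j) y = pder i (phi j) y / Real.cos (phi j y) ^ 2 := by
        have hev : lam j =ᶠ[nhds y] fun z => Real.tan (phi j z) := by
          filter_upwards [hU.mem_nhds hy] with z hz using htan j z hz
        rw [Bialy.pder_congr hev, Bialy.pder_tan_comp (hdφ j y hy) (hcos j y hy)]
      rw [hpl, htan i y hy, htan j y hy]
      exact Bialy.key_id _ _ _ (hcos i y hy) (hcos j y hy) (hsin i j hij y hy)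
    rw [Bialy.pder_congr heq, Bialy.pder_sub (hG i j hij x hx) (hH i j x hx)]
  -- symmetry of the correction term
  have sym : ∀ i j (k : Fin n), ∀ x ∈ U,
      pder k (fun y => Real.tan (phi j y) * pder i (phi j) y) x =
      pder i (fun y => Real.tan (phi j y) * pder k (phi j) y) x := by
    intro i j k x hx
    rw [Bialy.pder_mul (hT j x hx) (hdP i j x hx), Bialy.pder_mul (hT j x hx) (hdP k j x hx),
      Bialy.pder_tan_comp (hdφ j x hx) (hcos j x hx) k,
      Bialy.pder_tan_comp (hdφ j x hx) (hcos j x hx) i,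
      Bialy.pder_comm hU (hphi j) hx i k]
    ring
  constructor
  · intro h i j k hij hjk hik x hx
    have e1 := bridge i j k hij x hx
    have e2 := bridge k j i (Ne.symm hjk) x hx
    have e3 := sym i j k x hx
    have hR := h i j k hij hjk hik x hx
    linarith
  · intro h i j k hij hjk hik x hx
    have e1 := bridge i j k hij x hx
    have e2 := bridge k j i (Ne.symm hjk) x hx
    have e3 := sym i j k x hx
    have hP := h i j k hij hjk hik x hx
    linarith
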